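/- (Discrete-time ELBO for masked diffusion.) Under the discrete-time masked-diffusion setup, the MDLM evidence lower bound is valid: Σ_{i=1}^n Σ_{t=1}^{T−1} E_Q[ 1{z_{t+1}(τ)_i = none} · ((α(t) − α(t+1))/(1 − α(t+1))) · log( π(z_{t+1}(τ)) i (x_i) ) ] ≤ log E_Q[ ∏_{i=1}^n r_i(τ) ], i.e., the weighted masked cross-entropy objective lower-bounds the log-evidence of the clean sequence x. -/

import Mathlib

/-!
On the event `τ i ≤ t`, where position `i` is masked at time `t + 1`, the masked sequence
`z_{t+1}` does not depend on `τ i`. As the masking times are independent, the weight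
`(α t - α (t+1)) / (1 - α (t+1)) = P(τ i = t) / P(τ i ≤ t)` therefore turns the `(i, t)` term into
`E_Q[1{τ i = t} log r_i]`. Summing over `t` gives `E_Q[log r_i]`, summing over `i` gives
`E_Q[log ∏ i, r_i]`, and Jensen's inequality for the concave logarithm concludes.
-/

open scoped Classical

/-- The partially masked sequence `z_s(τ)`: at time `s`, position `i` still shows the
clean token `x i` if `s ≤ τ i`, and is masked (`none`) otherwise. -/
def maskedSeq {V : Type*} {n : ℕ} (x : Fin n → V) (τ : Fin n → ℕ) (s : ℕ) :
    Fin n → Option V :=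
  fun i => if s ≤ τ i then some (x i) else none

/-- The forward-process probability of the masking-time vector `τ`:
`q_fwd(τ) = ∏ i, (α (τ i) − α (τ i + 1))`. -/
noncomputable def fwdProb {n : ℕ} (α : ℕ → ℝ) (τ : Fin n → ℕ) : ℝ :=
  ∏ i, (α (τ i) - α (τ i + 1))

/-- Expectation of `F` over masking-time vectors `τ ∈ {1, …, T−1}ⁿ` under the product
measure `Q` with `P(τ i = t) = α t − α (t+1)`. -/
noncomputable def expQ {n : ℕ} (α : ℕ → ℝ) (T : ℕ) (F : (Fin n → ℕ) → ℝ) : ℝ :=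
  ∑ τ ∈ Fintype.piFinset (fun _ : Fin n => Finset.Icc 1 (T - 1)), fwdProb α τ * F τ

open Finset Fintype Function

section ProductWeights

variable {ι β : Type*} [Fintype ι] [DecidableEq ι] (w : β → ℝ)

lemma mul_prod_update (τ : ι → β) (i : ι) (b : β) :
    w (τ i) * ∏ j, w (update τ i b j) = w b * ∏ j, w (τ j) := by
  simp_rw [apply_update (fun _ => w) τ i b,
    prod_update_of_mem (mem_univ i), prod_eq_mul_prod_sdiff_singleton_of_mem (mem_univ i)]
  ring

variable [DecidableEq β] {s : Finset β} (i : ι)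

/-- Moving coordinate `i` from `a` to `b` rescales the weight of each vector by `w b / w a`. -/
lemma mul_sum_filter_apply_eq_comm {a b : β} (ha : a ∈ s) (hb : b ∈ s) (h : (ι → β) → ℝ)
    (hh : ∀ τ, τ i = a → h (update τ i b) = h τ) :
    w b * ∑ τ ∈ piFinset (fun _ => s) with τ i = a, (∏ j, w (τ j)) * h τ =
      w a * ∑ τ ∈ piFinset (fun _ => s) with τ i = b, (∏ j, w (τ j)) * h τ := by
  have hupdate : ∀ {τ : ι → β} {c : β}, c ∈ s → τ ∈ piFinset (fun _ => s) →
      update τ i c ∈ piFinset (fun _ => s) := fun hc hτ =>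
    mem_piFinset.2 fun j => by
      rcases eq_or_ne j i with rfl | hj
      · simpa using hc
      · simpa [hj] using mem_piFinset.1 hτ j
  rw [mul_sum, mul_sum]
  refine sum_nbij' (fun τ => update τ i b) (fun τ => update τ i a) ?_ ?_ ?_ ?_ ?_
  · intro τ hτ
    simp only [mem_filter] at hτ ⊢
    exact ⟨hupdate hb hτ.1, update_self i b τ⟩
  · intro τ hτ
    simp only [mem_filter] at hτ ⊢
    exact ⟨hupdate ha hτ.1, update_self i a τ⟩
  · intro τ hτ
    simp [← (mem_filter.1 hτ).2]
  · intro τ hτ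
    simp [← (mem_filter.1 hτ).2]
  · intro τ hτ
    rw [mem_filter] at hτ
    rw [hh τ hτ.2, ← hτ.2, ← mul_assoc (w (τ i)), mul_prod_update, mul_assoc]

lemma mul_sum_filter_mem_eq {A : Finset β} (hA : A ⊆ s) {t : β} (ht : t ∈ A)
    (h : (ι → β) → ℝ) (hh : ∀ τ a, τ i ∈ A → a ∈ A → h (update τ i a) = h τ) :
    w t * ∑ τ ∈ piFinset (fun _ => s) with τ i ∈ A, (∏ j, w (τ j)) * h τ =
      (∑ a ∈ A, w a) * ∑ τ ∈ piFinset (fun _ => s) with τ i = t, (∏ j, w (τ j)) * h τ := by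
  rw [← sum_fiberwise_eq_sum_filter, mul_sum, sum_mul]
  refine sum_congr rfl fun a ha => ?_
  exact mul_sum_filter_apply_eq_comm w i (hA ha) (hA ht) h fun τ hτ => hh τ t (hτ ▸ ha) ht

end ProductWeights

lemma sum_Icc_sub_succ (α : ℕ → ℝ) (t : ℕ) :
    ∑ s ∈ Icc 1 t, (α s - α (s + 1)) = α 1 - α (t + 1) := by
  induction t with
  | zero => simp
  | succ t ih => rw [sum_Icc_succ_top (by omega), ih]; ring

section MaskedDiffusion

variable {V : Type*} {n : ℕ} (x : Fin n → V)

lemma maskedSeq_eq_none_iff (τ : Fin n → ℕ) (s : ℕ) (i : Fin n) :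
    maskedSeq x τ s i = none ↔ τ i < s := by
  simp [maskedSeq]

lemma maskedSeq_update_of_lt {τ : Fin n → ℕ} {i : Fin n} {s a : ℕ} (hi : τ i < s) (ha : a < s) :
    maskedSeq x (update τ i a) s = maskedSeq x τ s := by
  funext j
  rcases eq_or_ne j i with rfl | hj
  · simp [maskedSeq, hi.not_ge, ha.not_ge]
  · simp [maskedSeq, hj]

variable {T : ℕ} {α : ℕ → ℝ}

lemma expQ_sum {ι : Type*} (s : Finset ι) (F : ι → (Fin n → ℕ) → ℝ) :
    ∑ i ∈ s, expQ α T (F i) = expQ α T (fun τ => ∑ i ∈ s, F i τ) := by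
  simp_rw [expQ, mul_sum]
  exact sum_comm

lemma expQ_ite_maskedSeq_eq_sum_filter (hα : StrictAntiOn α (Set.Icc 1 T)) (hα1 : α 1 = 1)
    (i : Fin n) (g : (Fin n → Option V) → ℝ) {t : ℕ} (ht : t ∈ Icc 1 (T - 1)) :
    expQ α T (fun τ => (if maskedSeq x τ (t + 1) i = none then (1 : ℝ) else 0) *
        ((α t - α (t + 1)) / (1 - α (t + 1))) * g (maskedSeq x τ (t + 1))) =
      ∑ τ ∈ piFinset (fun _ : Fin n => Icc 1 (T - 1)) with τ i = t,
        fwdProb α τ * g (maskedSeq x τ (τ i + 1)) := by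
  obtain ⟨ht1, htT⟩ := mem_Icc.1 ht
  have hden : 0 < 1 - α (t + 1) := by
    rw [← hα1]
    exact sub_pos.2 (hα ⟨le_rfl, by omega⟩ ⟨by omega, by omega⟩ (by omega))
  have hmasked : ∀ τ ∈ piFinset (fun _ : Fin n => Icc 1 (T - 1)),
      maskedSeq x τ (t + 1) i = none ↔ τ i ∈ Icc 1 t := fun τ hτ => by
    have := (mem_Icc.1 (mem_piFinset.1 hτ i)).1
    rw [maskedSeq_eq_none_iff, mem_Icc]
    omega
  have hcond := mul_sum_filter_mem_eq (fun t => α t - α (t + 1)) i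
    (Icc_subset_Icc_right htT) (right_mem_Icc.2 ht1) (fun τ => g (maskedSeq x τ (t + 1)))
    fun τ a hτ ha => by
      rw [maskedSeq_update_of_lt x (Nat.lt_succ_of_le (mem_Icc.1 hτ).2)
        (Nat.lt_succ_of_le (mem_Icc.1 ha).2)]
  rw [sum_Icc_sub_succ, hα1] at hcond
  calc expQ α T _
      = (α t - α (t + 1)) / (1 - α (t + 1)) * ∑ τ ∈ piFinset (fun _ : Fin n => Icc 1 (T - 1))
          with τ i ∈ Icc 1 t, fwdProb α τ * g (maskedSeq x τ (t + 1)) := by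
        rw [sum_filter, mul_sum]
        refine sum_congr rfl fun τ hτ => ?_
        simp only [hmasked τ hτ]
        split_ifs <;> ring
    _ = ∑ τ ∈ piFinset (fun _ : Fin n => Icc 1 (T - 1)) with τ i = t,
          fwdProb α τ * g (maskedSeq x τ (t + 1)) := by
        rw [div_mul_eq_mul_div, div_eq_iff hden.ne']
        exact hcond.trans (mul_comm _ _)
    _ = _ := sum_congr rfl fun τ hτ => by rw [(mem_filter.1 hτ).2]

lemma sum_expQ_ite_maskedSeq (hα : StrictAntiOn α (Set.Icc 1 T)) (hα1 : α 1 = 1) (i : Fin n)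
    (g : (Fin n → Option V) → ℝ) :
    ∑ t ∈ Icc 1 (T - 1), expQ α T (fun τ =>
        (if maskedSeq x τ (t + 1) i = none then (1 : ℝ) else 0) *
          ((α t - α (t + 1)) / (1 - α (t + 1))) * g (maskedSeq x τ (t + 1))) =
      expQ α T (fun τ => g (maskedSeq x τ (τ i + 1))) := by
  rw [sum_congr rfl fun t ht => expQ_ite_maskedSeq_eq_sum_filter x hα hα1 i g ht]
  exact sum_fiberwise_of_maps_to (g := fun τ : Fin n → ℕ => τ i)
    (fun τ hτ => mem_piFinset.1 hτ i) _

end MaskedDiffusion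

section ForwardProcess

variable {n T : ℕ} {α : ℕ → ℝ}

lemma sum_fwdProb (hα1 : α 1 = 1) (hαT : α T = 0) (hT : 1 ≤ T) :
    ∑ τ ∈ piFinset (fun _ : Fin n => Icc 1 (T - 1)), fwdProb α τ = 1 := by
  calc _ = ∏ _i : Fin n, ∑ t ∈ Icc 1 (T - 1), (α t - α (t + 1)) := (prod_univ_sum _ _).symm
    _ = 1 := by rw [sum_Icc_sub_succ, Nat.sub_add_cancel hT, hα1, hαT, sub_zero, prod_const_one]

lemma fwdProb_nonneg (hα : AntitoneOn α (Set.Icc 1 T)) {τ : Fin n → ℕ}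
    (hτ : τ ∈ piFinset (fun _ : Fin n => Icc 1 (T - 1))) : 0 ≤ fwdProb α τ :=
  prod_nonneg fun i _ => by
    obtain ⟨h1, hT⟩ := mem_Icc.1 (mem_piFinset.1 hτ i)
    exact sub_nonneg.2 (hα ⟨h1, by omega⟩ ⟨by omega, by omega⟩ (Nat.le_succ _))

lemma expQ_log_le_log_expQ (hα : AntitoneOn α (Set.Icc 1 T)) (hα1 : α 1 = 1) (hαT : α T = 0)
    (hT : 1 ≤ T) (F : (Fin n → ℕ) → ℝ) (hF : ∀ τ, 0 < F τ) :
    expQ α T (fun τ => Real.log (F τ)) ≤ Real.log (expQ α T F) := by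
  simpa [expQ] using strictConcaveOn_log_Ioi.concaveOn.le_map_sum
    (fun τ hτ => fwdProb_nonneg hα hτ) (sum_fwdProb hα1 hαT hT) fun τ _ => hF τ

end ForwardProcess

theorem masked_diffusion_elbo_general
    {V : Type*} {n : ℕ} (x : Fin n → V)
    {T : ℕ} (hT : 2 ≤ T) (α : ℕ → ℝ)
    (hα : StrictAntiOn α (Set.Icc 1 T)) (hα1 : α 1 = 1) (hαT : α T = 0)
    (π : (Fin n → Option V) → Fin n → V → ℝ)
    (hπ : ∀ ctx i v, π ctx i v ∈ Set.Ioc (0 : ℝ) 1) :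
    ∑ i, ∑ t ∈ Finset.Icc 1 (T - 1),
        expQ α T (fun τ =>
          (if maskedSeq x τ (t + 1) i = none then (1 : ℝ) else 0) *
            ((α t - α (t + 1)) / (1 - α (t + 1))) *
            Real.log (π (maskedSeq x τ (t + 1)) i (x i))) ≤
      Real.log (expQ α T (fun τ => ∏ i, π (maskedSeq x τ (τ i + 1)) i (x i))) := by
  have hr : ∀ τ i, 0 < π (maskedSeq x τ (τ i + 1)) i (x i) := fun τ i => (hπ _ i (x i)).1
  calc _ = ∑ i, expQ α T (fun τ => Real.log (π (maskedSeq x τ (τ i + 1)) i (x i))) :=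
        sum_congr rfl fun i _ => sum_expQ_ite_maskedSeq x hα hα1 i fun z => Real.log (π z i (x i))
    _ = expQ α T (fun τ => Real.log (∏ i, π (maskedSeq x τ (τ i + 1)) i (x i))) := by
        rw [expQ_sum]
        simp_rw [Real.log_prod fun i _ => (hr _ i).ne']
    _ ≤ _ := expQ_log_le_log_expQ hα.antitoneOn hα1 hαT (by omega) _
        fun τ => prod_pos fun i _ => hr τ i

/-- **Discrete-time ELBO for masked diffusion.** The weighted masked cross-entropy
objective lower-bounds the log-evidence `log E_Q[∏ i, r i]` of the clean sequence,
where `r i τ = π (z_{τ i + 1}(τ)) i (x i)`. -/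
theorem masked_diffusion_elbo
    {V : Type*} [Fintype V] [Nonempty V] {n : ℕ} (hn : 1 ≤ n) (x : Fin n → V)
    {T : ℕ} (hT : 2 ≤ T) (α : ℕ → ℝ)
    (hα : StrictAntiOn α (Set.Icc 1 T)) (hα1 : α 1 = 1) (hαT : α T = 0)
    (π : (Fin n → Option V) → Fin n → V → ℝ)
    (hπ : ∀ ctx i v, π ctx i v ∈ Set.Ioc (0 : ℝ) 1) :
    ∑ i, ∑ t ∈ Finset.Icc 1 (T - 1),
        expQ α T (fun τ =>
          (if maskedSeq x τ (t + 1) i = none then (1 : ℝ) else 0) *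
            ((α t - α (t + 1)) / (1 - α (t + 1))) *
            Real.log (π (maskedSeq x τ (t + 1)) i (x i))) ≤
      Real.log (expQ α T (fun τ => ∏ i, π (maskedSeq x τ (τ i + 1)) i (x i))) :=
  masked_diffusion_elbo_general x hT α hα hα1 hαT π hπ
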